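/- Let p ≥ 1 be a real number and z₁, z₂ ∈ ℂ. Define ξ(ρ) := (1 − ρ)z₂ + ρz₁ for ρ ∈ [0, 1], and interpret |w|^{p−2} w² as 0 when w = 0. Then |z₁|^{p} z₁ − |z₂|^{p} z₂ = ((p + 2)/2)(z₁ − z₂) ∫₀¹ |ξ(ρ)|^{p} dρ + (p/2)(conj(z₁) − conj(z₂)) ∫₀¹ |ξ(ρ)|^{p−2} ξ(ρ)² dρ, where conj denotes complex conjugation. -/

import Mathlib

/-- The power nonlinearity `z ↦ |z|^p z`. -/
noncomputable def powerNonlin (p : ℝ) (z : ℂ) : ℂ :=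
  ((‖z‖ ^ p : ℝ) : ℂ) * z

/-- The expression `|w|^{p−2} w²`, interpreted as `0` when `w = 0`. -/
noncomputable def powerQuad (p : ℝ) (w : ℂ) : ℂ :=
  if w = 0 then 0 else ((‖w‖ ^ (p - 2) : ℝ) : ℂ) * w ^ 2

/-! Away from the origin `F(z) = |z|^p z` is real-differentiable with
`DF(w)h = |w|^p h + p|w|^{p-2} Re(w̄h) w = ((p+2)/2)|w|^p h + (p/2)|w|^{p-2} w² h̄`, using
`2 Re(w̄h) = w̄h + wh̄` and `|w|² = ww̄`. At the origin `DF(0) = 0`, because `|F(z)| = |z|^p |z|`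
with `p > 0`, and the formula for `DF(w)` still holds there. The identity is the fundamental
theorem of calculus for `F ∘ ξ`, whose derivative `ρ ↦ DF(ξ ρ)(z₁ - z₂)` is continuous. -/

open Complex Filter Topology Asymptotics MeasureTheory

theorem tendsto_norm_rpow_nhds_zero {E : Type*} [NormedAddCommGroup E] {p : ℝ} (hp : 0 < p) :
    Tendsto (fun x : E => ‖x‖ ^ p) (𝓝 0) (𝓝 0) := by
  simpa [hp.ne'] using (continuous_norm.rpow_const fun _ => Or.inr hp.le).tendsto (0 : E)

theorem hasFDerivAt_norm_rpow_of_ne_zero {E : Type*} [NormedAddCommGroup E]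
    [InnerProductSpace ℝ E] (p : ℝ) {x : E} (hx : x ≠ 0) :
    HasFDerivAt (fun x : E => ‖x‖ ^ p) ((p * ‖x‖ ^ (p - 2)) • innerSL ℝ x) x := by
  apply HasStrictFDerivAt.hasFDerivAt
  convert! (hasStrictFDerivAt_norm_sq x).rpow_const (p := p / 2) (by simp [hx]) using 0
  simp_rw [← Real.rpow_natCast_mul (norm_nonneg _), ← Nat.cast_smul_eq_nsmul ℝ, smul_smul]
  ring_nf

theorem norm_powerQuad {p : ℝ} (hp : p ≠ 0) (w : ℂ) : ‖powerQuad p w‖ = ‖w‖ ^ p := by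
  rcases eq_or_ne w 0 with rfl | hw
  · simp [powerQuad, Real.zero_rpow hp]
  · rw [powerQuad, if_neg hw, norm_mul, norm_pow, norm_real, Real.norm_of_nonneg (by positivity),
      ← Real.rpow_natCast, ← Real.rpow_add (norm_pos_iff.2 hw)]
    norm_num

theorem continuous_powerQuad {p : ℝ} (hp : 0 < p) : Continuous (powerQuad p) := by
  refine continuous_iff_continuousAt.2 fun w => ?_
  rcases eq_or_ne w 0 with rfl | hw
  · rw [ContinuousAt, powerQuad, if_pos rfl, tendsto_zero_iff_norm_tendsto_zero]
    simpa only [norm_powerQuad hp.ne'] using tendsto_norm_rpow_nhds_zero hp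
  · have h : ContinuousAt (fun z : ℂ => ((‖z‖ ^ (p - 2) : ℝ) : ℂ) * z ^ 2) w := by
      fun_prop (disch := simp [hw])
    exact h.congr ((eventually_ne_nhds hw).mono fun z hz => (if_neg hz).symm)

noncomputable def powerNonlinFDeriv (p : ℝ) (w : ℂ) : ℂ →L[ℝ] ℂ :=
  ((((p + 2) / 2 : ℝ) : ℂ) * ((‖w‖ ^ p : ℝ) : ℂ)) • ContinuousLinearMap.id ℝ ℂ +
    (((p / 2 : ℝ) : ℂ) * powerQuad p w) • conjCLE.toContinuousLinearMap

theorem powerNonlinFDeriv_apply (p : ℝ) (w h : ℂ) :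
    powerNonlinFDeriv p w h = (((p + 2) / 2 : ℝ) : ℂ) * h * ((‖w‖ ^ p : ℝ) : ℂ) +
      ((p / 2 : ℝ) : ℂ) * starRingEnd ℂ h * powerQuad p w := by
  simp only [powerNonlinFDeriv, add_apply, smul_apply, ContinuousLinearMap.id_apply,
    ContinuousLinearEquiv.coe_coe, conjCLE_apply, smul_eq_mul]
  ring

theorem hasFDerivAt_powerNonlin_zero {p : ℝ} (hp : 0 < p) :
    HasFDerivAt (powerNonlin p) (0 : ℂ →L[ℝ] ℂ) 0 := by
  refine .of_isLittleO ?_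
  have h := ((isLittleO_one_iff ℝ).2 (tendsto_norm_rpow_nhds_zero (E := ℂ) hp)).smul_isBigO
    (isBigO_refl (fun z : ℂ => z) _)
  simpa [powerNonlin, real_smul] using h

theorem hasFDerivAt_powerNonlin_of_ne_zero (p : ℝ) {w : ℂ} (hw : w ≠ 0) :
    HasFDerivAt (powerNonlin p) (powerNonlinFDeriv p w) w := by
  have hF : (fun z : ℂ => ‖z‖ ^ p) • id = powerNonlin p := funext fun _ => real_smul
  refine hF ▸ ((hasFDerivAt_norm_rpow_of_ne_zero p hw).smul (hasFDerivAt_id w)).congr_fderiv ?_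
  ext1 h
  have hpow : ‖w‖ ^ p = ‖w‖ ^ (p - 2) * ‖w‖ ^ 2 := by
    rw [← Real.rpow_natCast, ← Real.rpow_add (norm_pos_iff.2 hw)]
    norm_num
  have hsq : ((‖w‖ ^ 2 : ℝ) : ℂ) = w * starRingEnd ℂ w := by
    rw [mul_conj, normSq_eq_norm_sq]
  have hre : (((h * starRingEnd ℂ w).re : ℝ) : ℂ) * 2 =
      h * starRingEnd ℂ w + starRingEnd ℂ h * w := by
    have h₂ := add_conj (h * starRingEnd ℂ w)
    rw [map_mul, conj_conj] at h₂
    push_cast at h₂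
    linear_combination -h₂
  simp only [add_apply, smul_apply, ContinuousLinearMap.smulRight_apply,
    ContinuousLinearMap.id_apply, innerSL_apply_apply, Complex.inner, id, real_smul, smul_eq_mul,
    powerNonlinFDeriv_apply, powerQuad, if_neg hw, hpow]
  push_cast at hsq ⊢
  linear_combination (p / 2 * ((‖w‖ ^ (p - 2) : ℝ) : ℂ) * w) * hre -
    (((‖w‖ ^ (p - 2) : ℝ) : ℂ) * h * p / 2) * hsq

theorem hasFDerivAt_powerNonlin {p : ℝ} (hp : 0 < p) (w : ℂ) :
    HasFDerivAt (powerNonlin p) (powerNonlinFDeriv p w) w := by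
  rcases eq_or_ne w 0 with rfl | hw
  · convert hasFDerivAt_powerNonlin_zero hp
    ext1 h
    simp [powerNonlinFDeriv_apply, powerQuad, Real.zero_rpow hp.ne']
  · exact hasFDerivAt_powerNonlin_of_ne_zero p hw

/-- Fundamental-theorem-of-calculus representation of the difference of power nonlinearities:
`|z₁|^p z₁ − |z₂|^p z₂ = ((p+2)/2)(z₁ − z₂)∫₀¹ |ξ|^p dρ + (p/2)(z̄₁ − z̄₂)∫₀¹ |ξ|^{p−2} ξ² dρ`,
where `ξ(ρ) = (1 − ρ)z₂ + ρ z₁`. -/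
theorem powerNonlin_difference_formula (p : ℝ) (hp : 1 ≤ p) (z₁ z₂ : ℂ) :
    powerNonlin p z₁ - powerNonlin p z₂ =
      (((p + 2) / 2 : ℝ) : ℂ) * (z₁ - z₂) *
        (∫ ρ in (0 : ℝ)..1,
          ((‖(1 - (ρ : ℂ)) * z₂ + (ρ : ℂ) * z₁‖ ^ p : ℝ) : ℂ)) +
      ((p / 2 : ℝ) : ℂ) * (starRingEnd ℂ z₁ - starRingEnd ℂ z₂) *
        (∫ ρ in (0 : ℝ)..1, powerQuad p ((1 - (ρ : ℂ)) * z₂ + (ρ : ℂ) * z₁)) := by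
  have hp₀ : 0 < p := by linarith
  set ξ : ℝ → ℂ := fun ρ => (1 - (ρ : ℂ)) * z₂ + (ρ : ℂ) * z₁
  have hξ : ∀ ρ, HasDerivAt ξ (z₁ - z₂) ρ := fun ρ => by
    have h := (hasDerivAt_id ρ).ofReal_comp
    refine (((h.const_sub 1).mul_const z₂).add (h.mul_const z₁)).congr_deriv ?_
    push_cast
    ring
  have hξc : Continuous ξ := by fun_prop
  have hint₁ : IntervalIntegrable
      (fun ρ => (((p + 2) / 2 : ℝ) : ℂ) * (z₁ - z₂) * ((‖ξ ρ‖ ^ p : ℝ) : ℂ)) volume 0 1 :=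
    (continuous_const.mul (continuous_ofReal.comp
      (hξc.norm.rpow_const fun _ => Or.inr hp₀.le))).intervalIntegrable 0 1
  have hint₂ : IntervalIntegrable
      (fun ρ => ((p / 2 : ℝ) : ℂ) * starRingEnd ℂ (z₁ - z₂) * powerQuad p (ξ ρ)) volume 0 1 :=
    (continuous_const.mul ((continuous_powerQuad hp₀).comp hξc)).intervalIntegrable 0 1
  have hFTC := intervalIntegral.integral_eq_sub_of_hasDerivAt
    (fun ρ _ => (hasFDerivAt_powerNonlin hp₀ (ξ ρ)).comp_hasDerivAt ρ (hξ ρ))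
    (by simpa only [powerNonlinFDeriv_apply] using hint₁.add hint₂)
  simp only [powerNonlinFDeriv_apply, Function.comp_apply, ξ] at hFTC
  rw [intervalIntegral.integral_add hint₁ hint₂, intervalIntegral.integral_const_mul,
    intervalIntegral.integral_const_mul] at hFTC
  simpa [map_sub] using hFTC.symm
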